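/- arXiv:quant-ph/0309104 — 2 statements merged into one kernel-verified Lean document; each statement's English description precedes it below -/
import Mathlib

section
/- For n even, the standard entangler E₀ is a unitary matrix and satisfies E₀ E₀ᵀ = S; in particular E₀ is an entangler. -/
open Matrix Complex

noncomputable section

/-- Number of ones in the binary expansion of `j`. -/
def popCnt (j : ℕ) : ℕ := (Nat.digits 2 j).sum

/-- The `N × N` matrix `S = (-iσ^y) ⊗ ⋯ ⊗ (-iσ^y)` (`n` factors), `N = 2^n`;
equivalently `S |j⟩ = (-1)^{#j} |N-1-j⟩`. -/
def Smat (n : ℕ) : Matrix (Fin (2 ^ n)) (Fin (2 ^ n)) ℂ :=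
  fun k j => if (k : ℕ) + (j : ℕ) = 2 ^ n - 1 then (-1 : ℂ) ^ popCnt (j : ℕ) else 0

/-- The standard entangler `E₀` (for `n` even):
`E₀ = (1/√2) Σ_{j<N/2} ( |j⟩⟨2j| + i|j⟩⟨2j+1| + (-1)^{#j}(|N-j-1⟩⟨2j| - i|N-j-1⟩⟨2j+1|) )`. -/
def E0 (n : ℕ) : Matrix (Fin (2 ^ n)) (Fin (2 ^ n)) ℂ :=
  fun r c =>
    (Real.sqrt 2 : ℂ)⁻¹ *
      (if (r : ℕ) < 2 ^ n / 2 then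
        (if (c : ℕ) = 2 * (r : ℕ) then 1
         else if (c : ℕ) = 2 * (r : ℕ) + 1 then Complex.I else 0)
      else
        (if (c : ℕ) = 2 * (2 ^ n - 1 - (r : ℕ)) then
            (-1 : ℂ) ^ popCnt (2 ^ n - 1 - (r : ℕ))
         else if (c : ℕ) = 2 * (2 ^ n - 1 - (r : ℕ)) + 1 then
            -Complex.I * (-1 : ℂ) ^ popCnt (2 ^ n - 1 - (r : ℕ))
         else 0))

/-- `Σ = Σ_{j<N/2} ( |j⟩⟨N/2+j| - |N/2+j⟩⟨j| )`. -/
def SigmaMat (n : ℕ) : Matrix (Fin (2 ^ n)) (Fin (2 ^ n)) ℂ :=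
  fun r c =>
    if (c : ℕ) = (r : ℕ) + 2 ^ n / 2 then 1
    else if (r : ℕ) = (c : ℕ) + 2 ^ n / 2 then -1 else 0

/-- The standard finagler `F₀` (for `n` odd):
`F₀ = (1/√2) Σ_{j<N/2} ( |j⟩⟨j| + |N-j-1⟩⟨j| + (-1)^{#j}(|j⟩⟨N/2+j| - |N-j-1⟩⟨N/2+j|) )`. -/
def F0 (n : ℕ) : Matrix (Fin (2 ^ n)) (Fin (2 ^ n)) ℂ :=
  fun r c =>
    (Real.sqrt 2 : ℂ)⁻¹ *
      (if (r : ℕ) < 2 ^ n / 2 then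
        (if (c : ℕ) = (r : ℕ) then 1
         else if (c : ℕ) = (r : ℕ) + 2 ^ n / 2 then (-1 : ℂ) ^ popCnt (r : ℕ) else 0)
      else
        (if (c : ℕ) = 2 ^ n - 1 - (r : ℕ) then 1
         else if (c : ℕ) = (2 ^ n - 1 - (r : ℕ)) + 2 ^ n / 2 then
            -(-1 : ℂ) ^ popCnt (2 ^ n - 1 - (r : ℕ))
         else 0))

/-- The concurrence capacity `κ(v) = sup { |(vψ)ᵀ S (vψ)| : ‖ψ‖ = 1, ψᵀSψ = 0 }`. -/
def kappa (n : ℕ) (v : Matrix (Fin (2 ^ n)) (Fin (2 ^ n)) ℂ) : ℝ :=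
  sSup { r : ℝ | ∃ ψ : Fin (2 ^ n) → ℂ,
    star ψ ⬝ᵥ ψ = 1 ∧ ψ ⬝ᵥ ((Smat n) *ᵥ ψ) = 0 ∧
    r = ‖(v *ᵥ ψ) ⬝ᵥ ((Smat n) *ᵥ (v *ᵥ ψ))‖ }

/-! Row `r` of `E₀` is `(1/√2) s_r (|2j⟩ + ε_r i |2j+1⟩)`, where `j = r` on the upper half
(`r < N/2`) and `j = N-1-r` on the lower half (`pairIndex`), `ε_r = ±1` according to the half
(`rowPhase`) and `s_r = ±1` (`rowSign`).
Two rows overlap only if they share `j`, i.e. `c = r` or `c = N-1-r`, and in the second case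
they lie in opposite halves, so `ε_r ε_c = -1`. Hence the factor `1 + ε_r ε_c` of `E₀E₀ᴴ` kills
its off-diagonal entries, while the factor `1 - ε_r ε_c` of `E₀E₀ᵀ` kills the diagonal and leaves
`s_r s_c` on the antidiagonal. That sign is `(-1)^{#c}` because `#j + #(N-1-j) = n` is even. -/

lemma popCnt_two_mul (m : ℕ) : popCnt (2 * m) = popCnt m := by
  rcases Nat.eq_zero_or_pos m with rfl | hm
  · rfl
  · simpa [popCnt] using
      congrArg List.sum (Nat.digits_add 2 one_lt_two 0 m two_pos (.inr hm.ne'))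

lemma popCnt_two_mul_add_one (m : ℕ) : popCnt (2 * m + 1) = popCnt m + 1 := by
  rw [add_comm (2 * m), popCnt, Nat.digits_add 2 one_lt_two 1 m one_lt_two (.inl one_ne_zero),
    List.sum_cons, add_comm, popCnt]

lemma popCnt_add_popCnt_compl (n : ℕ) {j : ℕ} (hj : j < 2 ^ n) :
    popCnt j + popCnt (2 ^ n - 1 - j) = n := by
  induction n generalizing j with
  | zero =>
    obtain rfl : j = 0 := by omega
    rfl
  | succ k ih =>
    rw [pow_succ] at hj ⊢
    obtain ⟨q, rfl | rfl⟩ := Nat.even_or_odd' j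
    · have := ih (j := q) (by omega)
      rw [show 2 ^ k * 2 - 1 - 2 * q = 2 * (2 ^ k - 1 - q) + 1 by omega, popCnt_two_mul,
        popCnt_two_mul_add_one]
      omega
    · have := ih (j := q) (by omega)
      rw [show 2 ^ k * 2 - 1 - (2 * q + 1) = 2 * (2 ^ k - 1 - q) by omega, popCnt_two_mul,
        popCnt_two_mul_add_one]
      omega

lemma neg_one_pow_popCnt_compl {R : Type*} [Monoid R] [HasDistribNeg R] {n : ℕ} (hev : Even n)
    {j : ℕ} (hj : j < 2 ^ n) : (-1 : R) ^ popCnt (2 ^ n - 1 - j) = (-1) ^ popCnt j := by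
  have hsum : Even (popCnt j + popCnt (2 ^ n - 1 - j)) := by rwa [popCnt_add_popCnt_compl n hj]
  exact neg_one_pow_congr (Nat.even_add.mp hsum).symm

lemma two_mul_two_pow_div_two {n : ℕ} (hn : 1 ≤ n) : 2 * (2 ^ n / 2) = 2 ^ n := by
  obtain ⟨k, rfl⟩ := Nat.exists_eq_add_of_le' hn
  omega

section PairVec

variable {R : Type*}

def pairVec [Zero R] (m j : ℕ) (u v : R) : Fin m → R :=
  fun x => if (x : ℕ) = 2 * j then u else if (x : ℕ) = 2 * j + 1 then v else 0

lemma star_pairVec [AddMonoid R] [StarAddMonoid R] {m : ℕ} (j : ℕ) (u v : R) :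
    star (pairVec m j u v) = pairVec m j (star u) (star v) := by
  ext x
  simp only [Pi.star_apply, pairVec]
  split_ifs <;> simp

lemma pairVec_dotProduct_pairVec [CommSemiring R] {m j j' : ℕ} (hj : 2 * j + 1 < m)
    (u v u' v' : R) :
    pairVec m j u v ⬝ᵥ pairVec m j' u' v' = if j = j' then u * u' + v * v' else 0 := by
  rw [dotProduct, Fintype.sum_eq_add ⟨2 * j, by omega⟩ ⟨2 * j + 1, hj⟩ (by simp [Fin.ext_iff])]
  · simp only [pairVec]
    split_ifs <;> first | omega | simp
  · rintro x ⟨hx, hx'⟩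
    simp only [pairVec, ← Fin.val_ne_iff] at hx hx' ⊢
    simp [hx, hx']

end PairVec

def pairIndex (n r : ℕ) : ℕ := if r < 2 ^ n / 2 then r else 2 ^ n - 1 - r

def rowSign (n r : ℕ) : ℂ := if r < 2 ^ n / 2 then 1 else (-1) ^ popCnt (2 ^ n - 1 - r)

def rowPhase (n r : ℕ) : ℂ := if r < 2 ^ n / 2 then 1 else -1

lemma two_mul_pairIndex_add_one_lt {n r : ℕ} (hn : 1 ≤ n) (hr : r < 2 ^ n) :
    2 * pairIndex n r + 1 < 2 ^ n := by
  have := two_mul_two_pow_div_two hn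
  unfold pairIndex
  split_ifs <;> omega

lemma pairIndex_eq_pairIndex_iff {n r c : ℕ} (hn : 1 ≤ n) (hr : r < 2 ^ n) (hc : c < 2 ^ n) :
    pairIndex n r = pairIndex n c ↔ r = c ∨ r + c = 2 ^ n - 1 := by
  have := two_mul_two_pow_div_two hn
  unfold pairIndex
  split_ifs <;> omega

lemma rowSign_mul_self (n r : ℕ) : rowSign n r * rowSign n r = 1 := by
  unfold rowSign; split_ifs <;> simp [← pow_add, ← two_mul]

lemma rowPhase_mul_self (n r : ℕ) : rowPhase n r * rowPhase n r = 1 := by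
  unfold rowPhase; split_ifs <;> norm_num

lemma star_rowSign (n r : ℕ) : star (rowSign n r) = rowSign n r := by
  unfold rowSign; split_ifs <;> simp

lemma star_rowPhase (n r : ℕ) : star (rowPhase n r) = rowPhase n r := by
  unfold rowPhase; split_ifs <;> simp

lemma rowPhase_mul_rowPhase_of_add_eq {n r c : ℕ} (hn : 1 ≤ n) (h : r + c = 2 ^ n - 1) :
    rowPhase n r * rowPhase n c = -1 := by
  have := two_mul_two_pow_div_two hn
  have := n.two_pow_pos
  unfold rowPhase
  split_ifs <;> first | omega | norm_num

lemma rowSign_mul_rowSign_of_add_eq {n r c : ℕ} (hn : 1 ≤ n) (hev : Even n)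
    (h : r + c = 2 ^ n - 1) : rowSign n r * rowSign n c = (-1) ^ popCnt c := by
  have := two_mul_two_pow_div_two hn
  have := n.two_pow_pos
  unfold rowSign
  split_ifs
  · omega
  · rw [one_mul]
    exact neg_one_pow_popCnt_compl hev (by omega)
  · rw [mul_one, show 2 ^ n - 1 - r = c by omega]
  · omega

lemma E0_row_eq_smul_pairVec (n : ℕ) (r : Fin (2 ^ n)) :
    E0 n r = ((Real.sqrt 2 : ℂ)⁻¹ * rowSign n r) •
      pairVec (2 ^ n) (pairIndex n r) 1 (rowPhase n r * I) := by
  ext c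
  by_cases h : (r : ℕ) < 2 ^ n / 2 <;>
    simp only [E0, rowSign, rowPhase, pairIndex, pairVec, h, Pi.smul_apply, smul_eq_mul] <;>
    split_ifs <;> ring

lemma inv_sqrt_two_mul_self : (Real.sqrt 2 : ℂ)⁻¹ * (Real.sqrt 2 : ℂ)⁻¹ = 2⁻¹ := by
  rw [← mul_inv, ← ofReal_mul, Real.mul_self_sqrt zero_le_two, ofReal_ofNat]

lemma E0_mul_transpose_apply {n : ℕ} (hn : 1 ≤ n) (r c : Fin (2 ^ n)) :
    (E0 n * (E0 n)ᵀ) r c = if pairIndex n r = pairIndex n c then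
      2⁻¹ * (rowSign n r * rowSign n c) * (1 - rowPhase n r * rowPhase n c) else 0 := by
  change E0 n r ⬝ᵥ E0 n c = _
  rw [E0_row_eq_smul_pairVec, E0_row_eq_smul_pairVec, smul_dotProduct, dotProduct_smul,
    smul_smul, mul_mul_mul_comm, inv_sqrt_two_mul_self,
    pairVec_dotProduct_pairVec (two_mul_pairIndex_add_one_lt hn r.isLt)]
  split_ifs
  · linear_combination 2⁻¹ * rowSign n r * rowSign n c * rowPhase n r * rowPhase n c * I_mul_I
  · simp

lemma E0_mul_star_apply {n : ℕ} (hn : 1 ≤ n) (r c : Fin (2 ^ n)) :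
    (E0 n * star (E0 n)) r c = if pairIndex n r = pairIndex n c then
      2⁻¹ * (rowSign n r * rowSign n c) * (1 + rowPhase n r * rowPhase n c) else 0 := by
  change E0 n r ⬝ᵥ star (E0 n c) = _
  rw [E0_row_eq_smul_pairVec, E0_row_eq_smul_pairVec, star_smul, star_pairVec, star_mul',
    star_rowSign, star_inv₀, star_one, star_mul', star_rowPhase, Complex.star_def, conj_ofReal,
    conj_I, smul_dotProduct, dotProduct_smul, smul_smul, mul_mul_mul_comm,
    inv_sqrt_two_mul_self, pairVec_dotProduct_pairVec (two_mul_pairIndex_add_one_lt hn r.isLt)]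
  split_ifs
  · linear_combination -2⁻¹ * rowSign n r * rowSign n c * rowPhase n r * rowPhase n c * I_mul_I
  · simp
lemma add_eq_of_pairIndex_eq {n : ℕ} (hn : 1 ≤ n) {r c : Fin (2 ^ n)} (hrc : r ≠ c)
    (hj : pairIndex n r = pairIndex n c) : (r : ℕ) + c = 2 ^ n - 1 :=
  ((pairIndex_eq_pairIndex_iff hn r.isLt c.isLt).mp hj).resolve_left (Fin.val_ne_of_ne hrc)

lemma E0_mul_star_self {n : ℕ} (hn : 1 ≤ n) : E0 n * star (E0 n) = 1 := by
  ext r c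
  rw [E0_mul_star_apply hn, one_apply]
  by_cases hrc : r = c
  · subst hrc
    rw [if_pos rfl, if_pos rfl, rowSign_mul_self, rowPhase_mul_self]
    norm_num
  · rw [if_neg hrc]
    split_ifs with hj
    · rw [rowPhase_mul_rowPhase_of_add_eq hn (add_eq_of_pairIndex_eq hn hrc hj)]
      ring
    · rfl

lemma E0_mul_transpose_self {n : ℕ} (hn : 1 ≤ n) (hev : Even n) :
    E0 n * (E0 n)ᵀ = Smat n := by
  ext r c
  rw [E0_mul_transpose_apply hn, Smat]
  by_cases hrc : r = c
  · subst hrc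
    have : (r : ℕ) + r ≠ 2 ^ n - 1 := by
      have := two_mul_two_pow_div_two hn
      omega
    rw [if_pos rfl, if_neg this, rowPhase_mul_self, sub_self, mul_zero]
  · split_ifs with hj hsum hsum
    · rw [rowSign_mul_rowSign_of_add_eq hn hev hsum, rowPhase_mul_rowPhase_of_add_eq hn hsum]
      ring
    · exact absurd (add_eq_of_pairIndex_eq hn hrc hj) hsum
    · exact absurd ((pairIndex_eq_pairIndex_iff hn r.isLt c.isLt).mpr (.inr hsum)) hj
    · rfl

/-- **The standard entangler is an entangler:** for `n` even, `E₀` is unitary and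
`E₀ E₀ᵀ = S`. -/
theorem E0_is_entangler (n : ℕ) (hn : 1 ≤ n) (hev : Even n) :
    E0 n ∈ Matrix.unitaryGroup (Fin (2 ^ n)) ℂ ∧
    E0 n * (E0 n)ᵀ = Smat n :=
  ⟨mem_unitaryGroup_iff.mpr (E0_mul_star_self hn), E0_mul_transpose_self hn hev⟩
end
end

section
/- Let n be odd and N = 2^n. A matrix F ∈ SU(N) satisfies F Σ⁻¹ · conj(F† X F) · Σ F† = S⁻¹ X̄ S for every X ∈ su(N) (i.e., F is a finagler, intertwining the Cartan involution X ↦ Σ⁻¹ X̄ Σ with the involution θ(X) = S⁻¹ X̄ S) if and only if F Σᵀ Fᵀ = ξ S for some ξ ∈ ℂ with ξ^N = 1. -/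
open Matrix Complex

noncomputable section

/-! Write `M = F Σᵀ Fᵀ`. Since `F` is unitary and `Σ⁻¹ = Σᵀ`, `M⁻¹ = F̄ Σ F†`, so the left-hand
side of the finagler identity is `M X̄ M⁻¹`, and the identity says that `S M` commutes with `X̄`.
Complex conjugation permutes `su(N)`, which spans `sl(N)` over `ℂ`, so `S M` is a scalar; as
`S² = -1` for odd `n`, this means `M = ξ S`, and `det F = det Σ = det S = 1` forces `ξ^N = 1`. -/

section

variable {ι : Type*} [Fintype ι]

lemma map_star_conjTranspose_mul_mul (F X : Matrix ι ι ℂ) :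
    (Fᴴ * X * F).map (starRingEnd ℂ) = Fᵀ * X.map (starRingEnd ℂ) * F.map (starRingEnd ℂ) := by
  rw [Matrix.map_mul, Matrix.map_mul]
  congr
  ext; simp

lemma forall_skewHermitian_map_star_iff {p : Matrix ι ι ℂ → Prop} :
    (∀ X : Matrix ι ι ℂ, Xᴴ = -X → X.trace = 0 → p (X.map (starRingEnd ℂ))) ↔
      ∀ X : Matrix ι ι ℂ, Xᴴ = -X → X.trace = 0 → p X := by
  have hsu : ∀ X : Matrix ι ι ℂ, Xᴴ = -X → X.trace = 0 →
      (X.map (starRingEnd ℂ))ᴴ = -X.map (starRingEnd ℂ) ∧ (X.map (starRingEnd ℂ)).trace = 0 := by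
    intro X hX htr
    refine ⟨?_, ?_⟩
    · rw [← conjTranspose_map (starRingEnd ℂ) (fun _ => rfl), hX]
      ext; simp
    · simpa [trace] using congrArg (starRingEnd ℂ) htr
  refine ⟨fun h X hX htr => ?_, fun h X hX htr => h _ (hsu X hX htr).1 (hsu X hX htr).2⟩
  have hXX : (X.map (starRingEnd ℂ)).map (starRingEnd ℂ) = X := by ext; simp
  simpa only [hXX] using h _ (hsu X hX htr).1 (hsu X hX htr).2

variable [DecidableEq ι]

lemma forall_commute_skewHermitian_iff_mem_range_scalar {T : Matrix ι ι ℂ} :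
    (∀ X : Matrix ι ι ℂ, Xᴴ = -X → X.trace = 0 → Commute T X) ↔ T ∈ Set.range (scalar ι) := by
  refine ⟨fun h => mem_range_scalar_of_commute_single fun i j hij => ?_, ?_⟩
  · set E : Matrix ι ι ℂ := single i j 1
    have hE : E.trace = 0 := trace_single_eq_of_ne i j 1 hij
    have hEdecomp : E = (2⁻¹ : ℂ) • (E - Eᴴ) + (-(2⁻¹ * I)) • (I • (E + Eᴴ)) := by
      rw [smul_smul, show -(2⁻¹ * I) * I = 2⁻¹ by rw [neg_mul, mul_assoc, I_mul_I]; ring]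
      module
    have hanti : (E - Eᴴ)ᴴ = -(E - Eᴴ) := by simp
    have hsym : (I • (E + Eᴴ))ᴴ = -(I • (E + Eᴴ)) := by
      simp [conjTranspose_smul, add_comm]
    have hcomm := ((h _ hanti (by simp [hE])).smul_right (2⁻¹ : ℂ)).add_right
      ((h _ hsym (by simp [hE])).smul_right (-(2⁻¹ * I)))
    rw [← hEdecomp] at hcomm
    exact hcomm.symm
  · rintro ⟨c, rfl⟩ X - -
    exact scalar_commute c (fun _ => Commute.all _ _) X

lemma conj_eq_inv_conj_iff_commute {R : Type*} [CommRing R] {M S Y : Matrix ι ι R}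
    (hM : IsUnit M.det) (hS : IsUnit S.det) :
    M * Y * M⁻¹ = S⁻¹ * Y * S ↔ Commute (S * M) Y := by
  constructor
  · intro h
    calc S * M * Y = S * (M * Y * M⁻¹) * M := by simp [mul_assoc, nonsing_inv_mul _ hM]
      _ = Y * (S * M) := by simp [h, ← mul_assoc, mul_nonsing_inv _ hS]
  · intro h
    calc M * Y * M⁻¹ = S⁻¹ * (S * M * Y) * M⁻¹ := by simp [← mul_assoc, nonsing_inv_mul _ hS]
      _ = S⁻¹ * Y * S := by simp [h.eq, mul_assoc, mul_nonsing_inv _ hM]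

lemma inv_mul_mul_transpose_of_mem_unitaryGroup {F P : Matrix ι ι ℂ}
    (hF : F ∈ unitaryGroup ι ℂ) (hP : IsUnit P.det) :
    (F * P⁻¹ * Fᵀ)⁻¹ = F.map (starRingEnd ℂ) * P * Fᴴ := by
  have hFt : Fᵀ * F.map (starRingEnd ℂ) = 1 :=
    mem_unitaryGroup_iff.mp (transpose_mem_unitaryGroup_iff.mpr hF)
  refine inv_eq_right_inv ?_
  calc F * P⁻¹ * Fᵀ * (F.map (starRingEnd ℂ) * P * Fᴴ)
      = F * P⁻¹ * (Fᵀ * F.map (starRingEnd ℂ)) * P * Fᴴ := by simp only [mul_assoc]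
    _ = F * Fᴴ := by rw [hFt, mul_one, mul_assoc F, nonsing_inv_mul _ hP, mul_one]
    _ = 1 := mem_unitaryGroup_iff.mp hF

end

lemma popCnt_add_two_mul (b y : ℕ) (hb : b < 2) : popCnt (b + 2 * y) = b + popCnt y := by
  rcases Nat.eq_zero_or_pos (b + 2 * y) with h | h
  · obtain ⟨rfl, rfl⟩ : b = 0 ∧ y = 0 := by omega
    rfl
  · rw [popCnt, Nat.digits_add 2 one_lt_two b y hb (by omega), List.sum_cons, popCnt]

-- `S` splits off the lowest bit, which changes `#j` by that bit; `Σ` splits off the highest.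
def finLowBitEquiv (k : ℕ) : Fin (2 ^ k) × Fin 2 ≃ Fin (2 ^ (k + 1)) :=
  finProdFinEquiv.trans (finCongr (pow_succ 2 k).symm)

def finHighBitEquiv (k : ℕ) : Fin 2 × Fin (2 ^ k) ≃ Fin (2 ^ (k + 1)) :=
  finProdFinEquiv.trans (finCongr (pow_succ' 2 k).symm)

@[simp] lemma finLowBitEquiv_val (k : ℕ) (p : Fin (2 ^ k) × Fin 2) :
    (finLowBitEquiv k p : ℕ) = p.2 + 2 * p.1 := rfl

@[simp] lemma finHighBitEquiv_val (k : ℕ) (p : Fin 2 × Fin (2 ^ k)) :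
    (finHighBitEquiv k p : ℕ) = p.2 + 2 ^ k * p.1 := rfl

open Kronecker

lemma Smat_succ (k : ℕ) :
    Smat (k + 1) = reindex (finLowBitEquiv k) (finLowBitEquiv k) (Smat k ⊗ₖ !![0, -1; 1, 0]) := by
  ext u v
  obtain ⟨⟨x, a⟩, rfl⟩ := (finLowBitEquiv k).surjective u
  obtain ⟨⟨y, b⟩, rfl⟩ := (finLowBitEquiv k).surjective v
  have hx := x.isLt
  have hy := y.isLt
  have hk : 2 ^ (k + 1) = 2 * 2 ^ k := pow_succ' 2 k
  rw [reindex_apply, submatrix_apply, Equiv.symm_apply_apply, Equiv.symm_apply_apply,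
    kroneckerMap_apply]
  simp only [Smat, finLowBitEquiv_val, popCnt_add_two_mul _ _ b.isLt, hk]
  fin_cases a <;> fin_cases b <;> simp [pow_add] <;> grind

lemma SigmaMat_succ (k : ℕ) :
    SigmaMat (k + 1) = reindex (finHighBitEquiv k) (finHighBitEquiv k) (!![0, 1; -1, 0] ⊗ₖ 1) := by
  ext u v
  obtain ⟨⟨a, x⟩, rfl⟩ := (finHighBitEquiv k).surjective u
  obtain ⟨⟨b, y⟩, rfl⟩ := (finHighBitEquiv k).surjective v
  have hx := x.isLt
  have hy := y.isLt
  have hk : 2 ^ (k + 1) / 2 = 2 ^ k := by rw [pow_succ']; omega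
  rw [reindex_apply, submatrix_apply, Equiv.symm_apply_apply, Equiv.symm_apply_apply,
    kroneckerMap_apply]
  simp only [SigmaMat, finHighBitEquiv_val, hk, one_apply, Fin.ext_iff]
  fin_cases a <;> fin_cases b <;> simp <;> grind

lemma Smat_zero : Smat 0 = 1 := by
  ext i j
  rw [Subsingleton.elim (α := Fin 1) i j]
  simp [Smat, popCnt]

lemma Smat_mul_self (n : ℕ) : Smat n * Smat n = (-1 : ℂ) ^ n • 1 := by
  induction n with
  | zero => simp [Smat_zero]
  | succ k ih =>
    have hS2 : !![(0 : ℂ), -1; 1, 0] * !![0, -1; 1, 0] = (-1 : ℂ) • 1 := by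
      simp [one_fin_two]
    rw [Smat_succ, ← coe_reindexAlgEquiv ℂ ℂ, ← map_mul, ← mul_kronecker_mul, ih, hS2,
      smul_kronecker, kronecker_smul, one_kronecker_one, smul_smul, map_smul, map_one, ← pow_succ]

lemma det_Smat (n : ℕ) : (Smat n).det = 1 := by
  induction n with
  | zero => simp [Smat_zero]
  | succ k ih => simp [Smat_succ, det_kronecker, ih, det_fin_two_of]

lemma SigmaMat_mul_transpose (n : ℕ) (hn : 1 ≤ n) : SigmaMat n * (SigmaMat n)ᵀ = 1 := by
  obtain ⟨k, rfl⟩ := Nat.exists_eq_add_of_le' hn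
  have hB : !![(0 : ℂ), 1; -1, 0] * !![(0 : ℂ), 1; -1, 0]ᵀ = 1 := by
    ext i j; fin_cases i <;> fin_cases j <;> simp [mul_apply, Fin.sum_univ_two]
  rw [SigmaMat_succ, transpose_reindex, ← kroneckerMap_transpose, ← coe_reindexAlgEquiv ℂ ℂ,
    ← map_mul, ← mul_kronecker_mul, hB, transpose_one, mul_one,
    one_kronecker_one, map_one]

lemma det_SigmaMat (n : ℕ) (hn : 1 ≤ n) : (SigmaMat n).det = 1 := by
  obtain ⟨k, rfl⟩ := Nat.exists_eq_add_of_le' hn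
  simp [SigmaMat_succ, det_kronecker, det_fin_two_of]

lemma Smat_mul_mem_range_scalar_iff {n : ℕ} (hodd : Odd n)
    {M : Matrix (Fin (2 ^ n)) (Fin (2 ^ n)) ℂ} (hM : M.det = 1) :
    Smat n * M ∈ Set.range (scalar _) ↔ ∃ ξ : ℂ, ξ ^ (2 ^ n) = 1 ∧ M = ξ • Smat n := by
  have hSS : Smat n * Smat n = -1 := by rw [Smat_mul_self, hodd.neg_one_pow, neg_one_smul]
  constructor
  · rintro ⟨c, hc⟩
    have hMS : M = (-c) • Smat n :=
      calc M = -(Smat n * (Smat n * M)) := by rw [← mul_assoc, hSS]; simp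
        _ = (-c) • Smat n := by rw [← hc, scalar_apply, ← smul_one_eq_diagonal]; simp
    refine ⟨-c, ?_, hMS⟩
    have hdet := congrArg det hMS
    rwa [det_smul, det_Smat, hM, Fintype.card_fin, mul_one, eq_comm] at hdet
  · rintro ⟨ξ, -, rfl⟩
    exact ⟨-ξ, by rw [Matrix.mul_smul, hSS, scalar_apply, ← smul_one_eq_diagonal]; simp⟩

theorem finagler_iff_general (n : ℕ) (hodd : Odd n)
    (F : Matrix (Fin (2 ^ n)) (Fin (2 ^ n)) ℂ)
    (hF : F ∈ Matrix.unitaryGroup (Fin (2 ^ n)) ℂ) (hFdet : F.det = 1) :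
    (∀ X : Matrix (Fin (2 ^ n)) (Fin (2 ^ n)) ℂ, Xᴴ = -X → X.trace = 0 →
        F * (SigmaMat n)⁻¹ * ((Fᴴ * X * F).map (starRingEnd ℂ)) * SigmaMat n * Fᴴ =
          (Smat n)⁻¹ * (X.map (starRingEnd ℂ)) * Smat n) ↔
      (∃ ξ : ℂ, ξ ^ (2 ^ n) = 1 ∧ F * (SigmaMat n)ᵀ * Fᵀ = ξ • Smat n) := by
  have hn : 1 ≤ n := hodd.pos
  have hSigmaInv : (SigmaMat n)⁻¹ = (SigmaMat n)ᵀ :=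
    inv_eq_right_inv (SigmaMat_mul_transpose n hn)
  have hSigma : IsUnit (SigmaMat n).det := by simp [det_SigmaMat n hn]
  have hS : IsUnit (Smat n).det := by simp [det_Smat]
  have hM : (F * (SigmaMat n)ᵀ * Fᵀ).det = 1 := by simp [hFdet, det_SigmaMat n hn]
  rw [← Smat_mul_mem_range_scalar_iff hodd hM, ← forall_commute_skewHermitian_iff_mem_range_scalar,
    ← forall_skewHermitian_map_star_iff (p := Commute _)]
  refine forall_congr' fun X => forall_congr' fun _ => forall_congr' fun _ => ?_
  rw [← conj_eq_inv_conj_iff_commute (by simp [hM]) hS, ← hSigmaInv,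
    inv_mul_mul_transpose_of_mem_unitaryGroup hF hSigma, map_star_conjTranspose_mul_mul]
  simp only [mul_assoc]

/-- **Characterization of finaglers** (for `n` odd): `F ∈ SU(2^n)` intertwines the
Cartan involution `X ↦ Σ⁻¹ X̄ Σ` with `θ(X) = S⁻¹ X̄ S` iff `F Σᵀ Fᵀ = ξ S` for some
`N`-th root of unity `ξ`. -/
theorem finagler_iff (n : ℕ) (hn : 1 ≤ n) (hodd : Odd n)
    (F : Matrix (Fin (2 ^ n)) (Fin (2 ^ n)) ℂ)
    (hF : F ∈ Matrix.unitaryGroup (Fin (2 ^ n)) ℂ) (hFdet : F.det = 1) :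
    (∀ X : Matrix (Fin (2 ^ n)) (Fin (2 ^ n)) ℂ, Xᴴ = -X → X.trace = 0 →
        F * (SigmaMat n)⁻¹ * ((Fᴴ * X * F).map (starRingEnd ℂ)) * SigmaMat n * Fᴴ =
          (Smat n)⁻¹ * (X.map (starRingEnd ℂ)) * Smat n) ↔
      (∃ ξ : ℂ, ξ ^ (2 ^ n) = 1 ∧ F * (SigmaMat n)ᵀ * Fᵀ = ξ • Smat n) :=
  finagler_iff_general n hodd F hF hFdet
end
end
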